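/- Let n ≥ 2 and m ≥ 1 be integers. The number ρ(n,m) of Rumer diagrams on n vertices with m edges equals the determinant C(m+n-1, n-1)·C(m+n-2, n-2) − C(m+n-2, n-1)·C(m+n-1, n-2), where C(a,b) denotes the binomial coefficient. -/

import Mathlib

/-- Two chords `(i,j)` and `(k,l)` (with `i < j`, `k < l`) of a circle with `n` marked
points cross iff `i < k < j < l` or `k < i < l < j`. -/
def Crosses {n : ℕ} (e f : Fin n × Fin n) : Prop :=
  (e.1 < f.1 ∧ f.1 < e.2 ∧ e.2 < f.2) ∨ (f.1 < e.1 ∧ e.1 < f.2 ∧ f.2 < e.2)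

/-- A Rumer diagram on `n` vertices: a multiset of edges `(i,j)`, `i < j`
(a loopless multigraph on `n` points placed on a circle), no two of which cross. -/
def IsRumer {n : ℕ} (E : Multiset (Fin n × Fin n)) : Prop :=
  (∀ e ∈ E, e.1 < e.2) ∧ ∀ e ∈ E, ∀ f ∈ E, ¬ Crosses e f

/-!
A Rumer diagram is determined by its left and right degree sequences `s, r : Fin n → ℕ`: its
innermost chord runs from the last left endpoint before the first right endpoint to that right
endpoint, and removing it leaves a smaller Rumer diagram. By the same peeling, a pair `(s, r)`
with equal sums comes from a Rumer diagram iff no prefix of the vertices closes more chords than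
it opens. These ballot pairs are counted by a reflection formula in `multichoose`, proved by
induction on the number of vertices after splitting off the first one; Pascal's rule turns it
into the binomial determinant.
-/

open Finset Nat

namespace Nat

theorem sum_range_multichoose_succ (ℓ a : ℕ) :
    ∑ t ∈ range (a + 1), multichoose ℓ t = multichoose (ℓ + 1) a := by
  induction a with
  | zero => simp
  | succ a ih => rw [sum_range_succ, ih, multichoose_succ_succ, add_comm]

theorem sum_range_multichoose_tsub (ℓ a : ℕ) :
    ∑ t ∈ range (a + 1), multichoose ℓ (a - t) = multichoose (ℓ + 1) a := by
  simpa using (sum_range_reflect (multichoose ℓ) (a + 1)).trans (sum_range_multichoose_succ ℓ a)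

theorem sum_range_multichoose_tsub_of_lt {ℓ d b : ℕ} (hd : d < b) :
    ∑ t ∈ range (d + 1), (multichoose ℓ (b - t) : ℤ)
      = multichoose (ℓ + 1) b - multichoose (ℓ + 1) (b - d - 1) := by
  induction d with
  | zero =>
    obtain ⟨b, rfl⟩ : ∃ b', b = b' + 1 := ⟨b - 1, by omega⟩
    simp [multichoose_succ_succ]
  | succ d ih =>
    rw [sum_range_succ, ih (by omega), show b - d - 1 = b - (d + 1) - 1 + 1 by omega,
      multichoose_succ_succ, show b - (d + 1) - 1 + 1 = b - (d + 1) by omega]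
    push_cast
    ring

theorem choose_add_eq_multichoose (a b : ℕ) : (a + b).choose b = multichoose (b + 1) a := by
  rw [multichoose_eq, show b + 1 + a - 1 = a + b by omega, choose_symm_add]

theorem multichoose_det_eq (ℓ k : ℕ) :
    (multichoose (ℓ + 1) (k + 1) : ℤ) * multichoose (ℓ + 1) (k + 1)
        - multichoose (ℓ + 1) (k + 2) * multichoose (ℓ + 1) k
      = multichoose (ℓ + 1) (k + 1) * multichoose ℓ (k + 1)
        - multichoose (ℓ + 1) k * multichoose ℓ (k + 2) := by
  have h₁ : (multichoose (ℓ + 1) (k + 2) : ℤ)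
      = multichoose ℓ (k + 2) + multichoose (ℓ + 1) (k + 1) :=
    mod_cast multichoose_succ_succ ℓ (k + 1)
  have h₂ : (multichoose (ℓ + 1) (k + 1) : ℤ) = multichoose ℓ (k + 1) + multichoose (ℓ + 1) k :=
    mod_cast multichoose_succ_succ ℓ k
  linear_combination (multichoose (ℓ + 1) (k + 1) : ℤ) * h₂ - (multichoose (ℓ + 1) k : ℤ) * h₁

end Nat

namespace Rumer

variable {ℓ : ℕ}

def partialSum (x : Fin ℓ → ℕ) (k : ℕ) : ℕ := ∑ i : Fin ℓ, if (i : ℕ) < k then x i else 0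

@[simp]
theorem partialSum_zero_right (x : Fin ℓ → ℕ) : partialSum x 0 = 0 := by
  simp [partialSum]

theorem partialSum_cons (x₀ : ℕ) (x : Fin ℓ → ℕ) (k : ℕ) :
    partialSum (Fin.cons x₀ x : Fin (ℓ + 1) → ℕ) (k + 1) = x₀ + partialSum x k := by
  simp [partialSum, Fin.sum_univ_succ]

theorem partialSum_add (x y : Fin ℓ → ℕ) (k : ℕ) :
    partialSum (x + y) k = partialSum x k + partialSum y k := by
  simp only [partialSum, ← sum_add_distrib, Pi.add_apply]
  refine sum_congr rfl fun i _ => ?_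
  split_ifs <;> rfl

theorem partialSum_single (i : Fin ℓ) (k : ℕ) :
    partialSum (Pi.single i 1) k = if (i : ℕ) < k then 1 else 0 := by
  rw [partialSum, sum_eq_single i (fun j _ hj => by simp [hj]) (by simp)]
  simp

theorem partialSum_eq_zero {x : Fin ℓ → ℕ} {k : ℕ} (h : ∀ i : Fin ℓ, (i : ℕ) < k → x i = 0) :
    partialSum x k = 0 :=
  sum_eq_zero fun i _ => by split_ifs with hi <;> simp [h i, hi]

theorem le_partialSum (x : Fin ℓ → ℕ) {i : Fin ℓ} {k : ℕ} (hi : (i : ℕ) < k) :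
    x i ≤ partialSum x k := by
  simpa [partialSum, hi] using single_le_sum (f := fun j : Fin ℓ => if (j : ℕ) < k then x j else 0)
    (fun _ _ => Nat.zero_le _) (mem_univ i)

theorem exists_pos_of_partialSum_pos {x : Fin ℓ → ℕ} {k : ℕ} (h : 0 < partialSum x k) :
    ∃ i : Fin ℓ, (i : ℕ) < k ∧ 0 < x i := by
  by_contra! h'
  exact h.ne' (partialSum_eq_zero fun i hi => Nat.le_zero.mp (h' i hi))

theorem partialSum_succ_le_of_add_single {s r : Fin ℓ → ℕ} {i j : Fin ℓ} (hij : i < j)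
    (hr : ∀ j' < j, r j' = 0) {k : ℕ}
    (h : partialSum (r + Pi.single j 1) (k + 1) ≤ partialSum (s + Pi.single i 1) k) :
    partialSum r (k + 1) ≤ partialSum s k := by
  rw [partialSum_add, partialSum_add, partialSum_single, partialSum_single] at h
  by_cases hjk : (j : ℕ) < k + 1
  · have hik : (i : ℕ) < k := by have : (i : ℕ) < j := hij; omega
    rw [if_pos hjk, if_pos hik] at h
    omega
  · rw [partialSum_eq_zero fun j' hj' => hr j' (Fin.lt_def.2 (by omega))]
    exact Nat.zero_le _

/-- `s i` and `r i` count the chords with left resp. right endpoint `i`, and `c` chords are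
already open before the first vertex. -/
def ballotPairs (ℓ c a b : ℕ) : Finset ((Fin ℓ → ℕ) × (Fin ℓ → ℕ)) :=
  (Nat.antidiagonalTuple ℓ a ×ˢ Nat.antidiagonalTuple ℓ b).filter
    fun p => ∀ k < ℓ, partialSum p.2 (k + 1) ≤ c + partialSum p.1 k

theorem mem_ballotPairs {c a b : ℕ} {p : (Fin ℓ → ℕ) × (Fin ℓ → ℕ)} :
    p ∈ ballotPairs ℓ c a b ↔ ∑ i, p.1 i = a ∧ ∑ i, p.2 i = b ∧
      ∀ k < ℓ, partialSum p.2 (k + 1) ≤ c + partialSum p.1 k := by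
  simp [ballotPairs, Finset.Nat.mem_antidiagonalTuple, and_assoc]

theorem cons_mem_ballotPairs_iff {c a b s₀ r₀ : ℕ} {s r : Fin ℓ → ℕ} :
    (Fin.cons s₀ s, Fin.cons r₀ r) ∈ ballotPairs (ℓ + 1) c a b ↔
      s₀ ≤ a ∧ r₀ ≤ min c b ∧ (s, r) ∈ ballotPairs ℓ (c + s₀ - r₀) (a - s₀) (b - r₀) := by
  simp only [mem_ballotPairs, Fin.sum_cons, Nat.forall_lt_succ_left, partialSum_cons,
    partialSum_zero_right]
  constructor
  · rintro ⟨hs, hr, h₀, h⟩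
    refine ⟨by omega, by omega, by omega, by omega, fun k hk => ?_⟩
    have := h k hk
    omega
  · rintro ⟨hs₀, hr₀, hs, hr, h⟩
    refine ⟨by omega, by omega, by omega, fun k hk => ?_⟩
    have := h k hk
    omega

theorem mem_ballotPairs_succ_iff {c a b : ℕ} {p : (Fin (ℓ + 1) → ℕ) × (Fin (ℓ + 1) → ℕ)} :
    p ∈ ballotPairs (ℓ + 1) c a b ↔ p.1 0 ≤ a ∧ p.2 0 ≤ min c b ∧
      (Fin.tail p.1, Fin.tail p.2) ∈ ballotPairs ℓ (c + p.1 0 - p.2 0) (a - p.1 0) (b - p.2 0) := by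
  obtain ⟨s, r⟩ := p
  conv_lhs => rw [← Fin.cons_self_tail s, ← Fin.cons_self_tail r]
  exact cons_mem_ballotPairs_iff

theorem card_ballotPairs_zero (c a b : ℕ) :
    #(ballotPairs 0 c a b) = multichoose 0 a * multichoose 0 b := by
  have hcard (a : ℕ) : #(Nat.antidiagonalTuple 0 a) = multichoose 0 a := by
    cases a <;> simp
  rw [ballotPairs, filter_true_of_mem (by simp), card_product, hcard, hcard]

theorem card_ballotPairs_succ (ℓ c a b : ℕ) :
    #(ballotPairs (ℓ + 1) c a b) = ∑ s₀ ∈ range (a + 1), ∑ r₀ ∈ range (min c b + 1),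
      #(ballotPairs ℓ (c + s₀ - r₀) (a - s₀) (b - r₀)) := by
  rw [← sum_product', card_eq_sum_card_fiberwise (f := fun p => (p.1 0, p.2 0))]
  · refine sum_congr rfl fun q hq => ?_
    rw [mem_product, mem_range, mem_range] at hq
    refine card_nbij' (fun p => (Fin.tail p.1, Fin.tail p.2))
      (fun p => (Fin.cons q.1 p.1, Fin.cons q.2 p.2)) ?_ ?_ ?_ ?_
    · intro p hp
      simp only [coe_filter] at hp
      obtain ⟨hp, rfl⟩ := hp
      exact (mem_ballotPairs_succ_iff.mp hp).2.2
    · intro p hp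
      simp only [coe_filter]
      exact ⟨cons_mem_ballotPairs_iff.mpr ⟨by omega, by omega, hp⟩, rfl⟩
    · intro p hp
      simp only [coe_filter] at hp
      obtain ⟨-, rfl⟩ := hp
      simp
    · intro p _
      simp
  · intro p hp
    have := mem_ballotPairs_succ_iff.mp hp
    simp only [coe_product, coe_range, Set.mem_prod, Set.mem_Iio]
    omega

/-- The reflection-principle count of `ballotPairs ℓ c a b`: all pairs, minus the pairs with
sums `a + c + 1` and `b - c - 1` that reflection puts in bijection with the violating ones. -/
def ballotFormula (ℓ c a b : ℕ) : ℤ :=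
  multichoose ℓ a * multichoose ℓ b
    - if c < b then (multichoose ℓ (a + c + 1) : ℤ) * multichoose ℓ (b - c - 1) else 0

theorem ballotFormula_tsub {ℓ c a b s₀ r₀ : ℕ} (hs₀ : s₀ ≤ a) (hr₀ : r₀ ≤ min c b) :
    ballotFormula ℓ (c + s₀ - r₀) (a - s₀) (b - r₀)
      = multichoose ℓ (a - s₀) * multichoose ℓ (b - r₀)
        - (if c + s₀ < b then (multichoose ℓ (b - c - 1 - s₀) : ℤ) else 0)
          * multichoose ℓ (a + c + 1 - r₀) := by
  rw [ballotFormula]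
  by_cases hs₀b : c + s₀ < b
  · rw [if_pos (by omega), if_pos hs₀b, mul_comm (multichoose ℓ (b - c - 1 - s₀) : ℤ),
      show a - s₀ + (c + s₀ - r₀) + 1 = a + c + 1 - r₀ by omega,
      show b - r₀ - (c + s₀ - r₀) - 1 = b - c - 1 - s₀ by omega]
  · rw [if_neg (by omega), if_neg hs₀b, zero_mul]

theorem ballotFormula_succ {ℓ c a b : ℕ} (h : b ≤ c + a) :
    ballotFormula (ℓ + 1) c a b = ∑ s₀ ∈ range (a + 1), ∑ r₀ ∈ range (min c b + 1),
      ballotFormula ℓ (c + s₀ - r₀) (a - s₀) (b - r₀) := by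
  rw [sum_congr rfl fun s₀ hs₀ => sum_congr rfl fun r₀ hr₀ =>
    ballotFormula_tsub (mem_range_succ_iff.1 hs₀) (mem_range_succ_iff.1 hr₀)]
  simp only [sum_sub_distrib, ← sum_mul_sum]
  have hs : ∑ s₀ ∈ range (a + 1), (multichoose ℓ (a - s₀) : ℤ) = multichoose (ℓ + 1) a := by
    exact_mod_cast sum_range_multichoose_tsub ℓ a
  rcases lt_or_ge c b with hcb | hbc
  · have hs' : ∑ s₀ ∈ range (a + 1),
        (if c + s₀ < b then (multichoose ℓ (b - c - 1 - s₀) : ℤ) else 0)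
          = multichoose (ℓ + 1) (b - c - 1) := by
      rw [← sum_filter, show (range (a + 1)).filter (c + · < b) = range (b - c - 1 + 1) by
        ext; simp only [mem_filter, mem_range]; omega]
      exact_mod_cast sum_range_multichoose_tsub ℓ (b - c - 1)
    have hr' := sum_range_multichoose_tsub_of_lt (ℓ := ℓ) (show c < a + c + 1 by omega)
    rw [show a + c + 1 - c - 1 = a by omega] at hr'
    rw [ballotFormula, min_eq_left hcb.le, hs, sum_range_multichoose_tsub_of_lt hcb, hs', hr',
      if_pos hcb]
    ring
  · have hr : ∑ r₀ ∈ range (b + 1), (multichoose ℓ (b - r₀) : ℤ) = multichoose (ℓ + 1) b := by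
      exact_mod_cast sum_range_multichoose_tsub ℓ b
    have hs' : ∑ s₀ ∈ range (a + 1),
        (if c + s₀ < b then (multichoose ℓ (b - c - 1 - s₀) : ℤ) else 0) = 0 :=
      sum_eq_zero fun s₀ _ => if_neg (by omega)
    rw [ballotFormula, min_eq_right hbc, hs, hr, hs', if_neg (by omega)]
    ring

theorem card_ballotPairs (ℓ : ℕ) {c a b : ℕ} (h : b ≤ c + a) :
    (#(ballotPairs ℓ c a b) : ℤ) = ballotFormula ℓ c a b := by
  induction ℓ generalizing c a b with
  | zero =>
    rw [card_ballotPairs_zero, ballotFormula]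
    split_ifs <;> simp
  | succ ℓ ih =>
    rw [card_ballotPairs_succ, ballotFormula_succ h]
    push_cast
    refine sum_congr rfl fun s₀ hs₀ => sum_congr rfl fun r₀ hr₀ => ih ?_
    rw [mem_range] at hs₀ hr₀
    omega

variable {n : ℕ}

theorem crosses_comm {e f : Fin n × Fin n} : Crosses e f ↔ Crosses f e := or_comm

theorem not_crosses_self (e : Fin n × Fin n) : ¬ Crosses e e := by
  simp [Crosses]

theorem not_crosses_of_le {i j : Fin n} {f : Fin n × Fin n} (hj : j ≤ f.2)
    (hi : f.1 < j → f.1 ≤ i) : ¬ Crosses (i, j) f := by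
  rintro (⟨h₁, h₂, -⟩ | ⟨-, -, h₃⟩)
  · exact (hi h₂).not_gt h₁
  · exact hj.not_gt h₃

theorem isRumer_zero : IsRumer (0 : Multiset (Fin n × Fin n)) := by
  simp [IsRumer]

theorem isRumer_cons_iff {x : Fin n × Fin n} {E : Multiset (Fin n × Fin n)} :
    IsRumer (x ::ₘ E) ↔ x.1 < x.2 ∧ (∀ f ∈ E, ¬ Crosses x f) ∧ IsRumer E := by
  simp only [IsRumer, Multiset.mem_cons, forall_eq_or_imp, not_crosses_self, crosses_comm (f := x),
    forall_and]
  tauto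

def leftDeg (E : Multiset (Fin n × Fin n)) (i : Fin n) : ℕ := (E.map Prod.fst).count i

def rightDeg (E : Multiset (Fin n × Fin n)) (j : Fin n) : ℕ := (E.map Prod.snd).count j

@[simp]
theorem leftDeg_zero : leftDeg (0 : Multiset (Fin n × Fin n)) = 0 := by
  funext; simp [leftDeg]

@[simp]
theorem rightDeg_zero : rightDeg (0 : Multiset (Fin n × Fin n)) = 0 := by
  funext; simp [rightDeg]

theorem leftDeg_cons (x : Fin n × Fin n) (E : Multiset (Fin n × Fin n)) :
    leftDeg (x ::ₘ E) = leftDeg E + Pi.single x.1 1 := by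
  funext i; simp [leftDeg, Multiset.count_cons, Pi.single_apply]

theorem rightDeg_cons (x : Fin n × Fin n) (E : Multiset (Fin n × Fin n)) :
    rightDeg (x ::ₘ E) = rightDeg E + Pi.single x.2 1 := by
  funext j; simp [rightDeg, Multiset.count_cons, Pi.single_apply]

theorem sum_leftDeg (E : Multiset (Fin n × Fin n)) : ∑ i, leftDeg E i = Multiset.card E := by
  simp [leftDeg]

theorem sum_rightDeg (E : Multiset (Fin n × Fin n)) : ∑ j, rightDeg E j = Multiset.card E := by
  simp [rightDeg]

theorem leftDeg_pos_iff {E : Multiset (Fin n × Fin n)} {i : Fin n} :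
    0 < leftDeg E i ↔ ∃ e ∈ E, e.1 = i := by
  simp [leftDeg, Multiset.count_pos]

theorem rightDeg_pos_iff {E : Multiset (Fin n × Fin n)} {j : Fin n} :
    0 < rightDeg E j ↔ ∃ e ∈ E, e.2 = j := by
  simp [rightDeg, Multiset.count_pos]

theorem partialSum_rightDeg_le {E : Multiset (Fin n × Fin n)} (hE : ∀ e ∈ E, e.1 < e.2)
    (k : ℕ) : partialSum (rightDeg E) (k + 1) ≤ partialSum (leftDeg E) k := by
  induction E using Multiset.induction_on with
  | empty => simp [partialSum]
  | cons x E ih =>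
    have hx : (x.1 : ℕ) < x.2 := hE x (Multiset.mem_cons_self _ _)
    have := ih fun e he => hE e (Multiset.mem_cons_of_mem he)
    rw [rightDeg_cons, leftDeg_cons, partialSum_add, partialSum_add, partialSum_single,
      partialSum_single]
    split_ifs <;> omega

/-- `(i, j)` is the chord that can be peeled off a Rumer diagram with left degrees `s` and right
degrees `r`. -/
def IsInnermost (s r : Fin n → ℕ) (i j : Fin n) : Prop :=
  0 < s i ∧ i < j ∧ 0 < r j ∧ (∀ j', 0 < r j' → j ≤ j') ∧ ∀ i', 0 < s i' → i' < j → i' ≤ i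

theorem exists_isInnermost {s r : Fin n → ℕ} (hr : ∃ j, 0 < r j)
    (hsr : ∀ j, 0 < r j → ∃ i < j, 0 < s i) : ∃ i j, IsInnermost s r i j := by
  obtain ⟨j₀, hj₀⟩ := hr
  obtain ⟨j, hj, hjmin⟩ := (univ.filter (0 < r ·)).exists_min_image id ⟨j₀, by simpa using hj₀⟩
  simp only [mem_filter, mem_univ, true_and, id] at hj hjmin
  obtain ⟨i₀, hi₀j, hi₀⟩ := hsr j hj
  obtain ⟨i, hi, himax⟩ :=
    (univ.filter fun i => 0 < s i ∧ i < j).exists_max_image id ⟨i₀, by simp [hi₀, hi₀j]⟩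
  simp only [mem_filter, mem_univ, true_and, id] at hi himax
  exact ⟨i, j, hi.1, hi.2, hj, hjmin, fun i' h₁ h₂ => himax i' ⟨h₁, h₂⟩⟩

theorem exists_isInnermost_leftDeg_rightDeg {E : Multiset (Fin n × Fin n)} (hE : ∀ e ∈ E, e.1 < e.2)
    (hE₀ : E ≠ 0) : ∃ i j, IsInnermost (leftDeg E) (rightDeg E) i j := by
  refine exists_isInnermost ?_ fun j hj => ?_
  · obtain ⟨e, he⟩ := Multiset.exists_mem_of_ne_zero hE₀
    exact ⟨e.2, rightDeg_pos_iff.2 ⟨e, he, rfl⟩⟩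
  · obtain ⟨e, he, rfl⟩ := rightDeg_pos_iff.1 hj
    exact ⟨e.1, hE e he, leftDeg_pos_iff.2 ⟨e, he, rfl⟩⟩

theorem IsRumer.mem_of_isInnermost {E : Multiset (Fin n × Fin n)} (hE : IsRumer E) {i j : Fin n}
    (h : IsInnermost (leftDeg E) (rightDeg E) i j) : (i, j) ∈ E := by
  obtain ⟨hi, hij, hj, hjmin, himax⟩ := h
  obtain ⟨f, hf, rfl⟩ := rightDeg_pos_iff.1 hj
  obtain ⟨g, hg, rfl⟩ := leftDeg_pos_iff.1 hi
  rcases (himax f.1 (leftDeg_pos_iff.2 ⟨f, hf, rfl⟩) (hE.1 f hf)).eq_or_lt with h₁ | h₁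
  · rwa [← h₁]
  rcases (hjmin g.2 (rightDeg_pos_iff.2 ⟨g, hg, rfl⟩)).eq_or_lt with h₂ | h₂
  · rwa [h₂]
  exact absurd (Or.inr ⟨h₁, hij, h₂⟩) (hE.2 g hg f hf)

theorem IsRumer.eq_of_leftDeg_eq_of_rightDeg_eq {E E' : Multiset (Fin n × Fin n)} (hE : IsRumer E)
    (hE' : IsRumer E') (hl : leftDeg E = leftDeg E') (hr : rightDeg E = rightDeg E') :
    E = E' := by
  induction E using Multiset.strongInductionOn generalizing E' with
  | ih E ih =>
  rcases eq_or_ne E 0 with rfl | hE₀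
  · rw [eq_comm, ← Multiset.card_eq_zero, ← sum_leftDeg, ← hl]
    simp
  obtain ⟨i, j, hij⟩ := exists_isInnermost_leftDeg_rightDeg hE.1 hE₀
  have hij' : IsInnermost (leftDeg E') (rightDeg E') i j := hl ▸ hr ▸ hij
  obtain ⟨E₀, rfl⟩ := Multiset.exists_cons_of_mem (IsRumer.mem_of_isInnermost hE hij)
  obtain ⟨E₀', rfl⟩ := Multiset.exists_cons_of_mem (IsRumer.mem_of_isInnermost hE' hij')
  rw [leftDeg_cons, leftDeg_cons, add_left_inj] at hl
  rw [rightDeg_cons, rightDeg_cons, add_left_inj] at hr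
  rw [ih E₀ (Multiset.lt_cons_self _ _) (isRumer_cons_iff.1 hE).2.2 (isRumer_cons_iff.1 hE').2.2
    hl hr]

theorem exists_eq_add_single {ι : Type*} [DecidableEq ι] {x : ι → ℕ} {i : ι} (h : 0 < x i) :
    ∃ y : ι → ℕ, x = y + Pi.single i 1 :=
  ⟨x - Pi.single i 1, funext fun j => by
    rcases eq_or_ne j i with rfl | hj <;> simp [*]; omega⟩

theorem exists_isRumer_of_ballot {s r : Fin n → ℕ} (hsum : ∑ i, s i = ∑ j, r j)
    (hbal : ∀ k < n, partialSum r (k + 1) ≤ partialSum s k) :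
    ∃ E, IsRumer E ∧ leftDeg E = s ∧ rightDeg E = r := by
  induction hm : ∑ j, r j generalizing s r with
  | zero =>
    have hr : r = 0 := funext fun j => sum_eq_zero_iff.1 hm j (mem_univ j)
    have hs : s = 0 := funext fun i => sum_eq_zero_iff.1 (hsum.trans hm) i (mem_univ i)
    exact ⟨0, isRumer_zero, leftDeg_zero.trans hs.symm, rightDeg_zero.trans hr.symm⟩
  | succ m ih =>
    obtain ⟨i, j, hi, hij, hj, hjmin, himax⟩ := exists_isInnermost (s := s) (r := r)
      (by
        obtain ⟨j, -, hj⟩ := exists_ne_zero_of_sum_ne_zero (hm.trans_ne m.succ_ne_zero)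
        exact ⟨j, Nat.pos_of_ne_zero hj⟩)
      (fun j hj => by
        obtain ⟨i, hi, hsi⟩ := exists_pos_of_partialSum_pos
          ((hj.trans_le (le_partialSum r (Nat.lt_succ_self j))).trans_le (hbal j j.isLt))
        exact ⟨i, hi, hsi⟩)
    obtain ⟨s', rfl⟩ := exists_eq_add_single hi
    obtain ⟨r', rfl⟩ := exists_eq_add_single hj
    simp only [Pi.add_apply, sum_add_distrib, sum_pi_single', mem_univ, if_true] at hsum hm
    have hbal' : ∀ k < n, partialSum r' (k + 1) ≤ partialSum s' k := fun k hk =>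
      partialSum_succ_le_of_add_single hij
        (fun j' hj' => Nat.eq_zero_of_not_pos fun h => (hjmin j' (Nat.lt_add_right _ h)).not_gt hj')
        (hbal k hk)
    obtain ⟨E, hE, rfl, rfl⟩ := ih (by omega) hbal' (by omega)
    refine ⟨(i, j) ::ₘ E, isRumer_cons_iff.2 ⟨hij, fun f hf => ?_, hE⟩, leftDeg_cons _ _,
      rightDeg_cons _ _⟩
    have hf₁ : 0 < (leftDeg E + Pi.single i 1 : Fin n → ℕ) f.1 :=
      Nat.lt_add_right _ (leftDeg_pos_iff.2 ⟨f, hf, rfl⟩)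
    have hf₂ : 0 < (rightDeg E + Pi.single j 1 : Fin n → ℕ) f.2 :=
      Nat.lt_add_right _ (rightDeg_pos_iff.2 ⟨f, hf, rfl⟩)
    exact not_crosses_of_le (hjmin _ hf₂) (himax _ hf₁)

theorem card_rumer_eq_card_ballotPairs (n m : ℕ) :
    Nat.card {E : Multiset (Fin n × Fin n) // Multiset.card E = m ∧ IsRumer E}
      = #(ballotPairs n 0 m m) := by
  rw [← Nat.card_eq_finsetCard]
  refine Nat.card_eq_of_bijective (fun E => ⟨(leftDeg E.1, rightDeg E.1), ?_⟩) ⟨?_, ?_⟩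
  · obtain ⟨E, hm, hE⟩ := E
    refine mem_ballotPairs.2 ⟨hm ▸ sum_leftDeg E, hm ▸ sum_rightDeg E, fun k _ => ?_⟩
    rw [zero_add]
    exact partialSum_rightDeg_le hE.1 k
  · rintro ⟨E, _, hE⟩ ⟨E', _, hE'⟩ h
    simp only [Subtype.mk.injEq, Prod.mk.injEq] at h
    exact Subtype.ext (IsRumer.eq_of_leftDeg_eq_of_rightDeg_eq hE hE' h.1 h.2)
  · rintro ⟨⟨s, r⟩, hp⟩
    obtain ⟨hs, hr, hbal⟩ := mem_ballotPairs.1 hp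
    obtain ⟨E, hE, rfl, rfl⟩ := exists_isRumer_of_ballot (hs.trans hr.symm) (by simpa using hbal)
    exact ⟨⟨E, (sum_leftDeg E).symm.trans hs, hE⟩, rfl⟩

end Rumer

open Rumer in
theorem card_rumer_eq_det (n m : ℕ) (hn : 2 ≤ n) (hm : 1 ≤ m) :
    (Nat.card {E : Multiset (Fin n × Fin n) // Multiset.card E = m ∧ IsRumer E} : ℤ)
      = ((m + n - 1).choose (n - 1) : ℤ) * ((m + n - 2).choose (n - 2) : ℤ)
        - ((m + n - 2).choose (n - 1) : ℤ) * ((m + n - 1).choose (n - 2) : ℤ) := by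
  obtain ⟨N, rfl⟩ : ∃ N, n = N + 2 := ⟨n - 2, by omega⟩
  obtain ⟨k, rfl⟩ : ∃ k, m = k + 1 := ⟨m - 1, by omega⟩
  rw [card_rumer_eq_card_ballotPairs, card_ballotPairs _ (by omega), ballotFormula,
    if_pos k.succ_pos]
  simp only [add_zero, tsub_zero, add_tsub_cancel_right]
  convert multichoose_det_eq (N + 1) k using 4 <;>
    rw [← choose_add_eq_multichoose] <;> congr 1 <;> omega
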